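/- Fix d ≥ 1, λ > 0, M ≥ 1 and k ≥ 2. Let v_1, …, v_k ∈ ℝ^d (e.g., v_j = ∇f(x_j) for a differentiable f and points x_j) and let s_{ℓ(k)}, …, s_{k−1} ∈ ℝ^d be unit vectors, where ℓ(k) := max{1, k − M − 1}. Set C_k := λ I_d + Σ_{j=ℓ(k)}^{k−1} s_j s_jᵀ. Then the bias term B_k := ‖ C_k⁻¹ Σ_{j=ℓ(k)}^{k−1} s_j s_jᵀ (v_j − v_k) ‖ satisfies B_k ≤ √(d(M+1)/λ) · Σ_{i=ℓ(k)}^{k−1} ‖v_{i+1} − v_i‖. -/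

import Mathlib

/-!
Write `C = λI + ∑ⱼ sⱼsⱼᵀ` and `cⱼ = sⱼ ⬝ (vⱼ - v_k)`. The bias vector is `∑ⱼ cⱼ C⁻¹sⱼ`, so by the
triangle and Cauchy–Schwarz inequalities its norm is at most `√(∑ cⱼ²) √(∑ ‖C⁻¹sⱼ‖²)`.
Since `C ⪰ λI`, `λ‖C⁻¹sⱼ‖² ≤ (C⁻¹sⱼ) ⬝ C(C⁻¹sⱼ) = sⱼ ⬝ C⁻¹sⱼ`, and these sum to
`tr (C⁻¹(C - λI)) = d - λ tr C⁻¹ ≤ d`. Finally `|cⱼ| ≤ ‖vⱼ - v_k‖`, which telescopes to at most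
the path length `∑ᵢ ‖vᵢ₊₁ - vᵢ‖`, and the window has at most `M + 1` indices.
-/

open Matrix Finset

/-- The Euclidean norm on `Fin n → ℝ`. -/
noncomputable def euclNorm {n : ℕ} (v : Fin n → ℝ) : ℝ := Real.sqrt (∑ i, v i ^ 2)

lemma vecMulVec_self_mulVec {n R : Type*} [Fintype n] [CommSemiring R] (a x : n → R) :
    vecMulVec a a *ᵥ x = (a ⬝ᵥ x) • a := by
  rw [vecMulVec_mulVec, op_smul_eq_smul]

section RegularizedGram

variable {n ι : Type*} [Fintype n] [DecidableEq n]

noncomputable def regularizedGram (lam : ℝ) (t : Finset ι) (s : ι → n → ℝ) : Matrix n n ℝ :=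
  lam • 1 + ∑ j ∈ t, vecMulVec (s j) (s j)

variable {lam : ℝ} (t : Finset ι) (s : ι → n → ℝ)

omit [DecidableEq n] in
lemma posSemidef_sum_vecMulVec_self : (∑ j ∈ t, vecMulVec (s j) (s j)).PosSemidef :=
  posSemidef_sum t fun j _ => by simpa using posSemidef_vecMulVec_self_star (s j)

lemma posDef_regularizedGram (hlam : 0 < lam) : (regularizedGram lam t s).PosDef :=
  (PosDef.one.smul hlam).add_posSemidef (posSemidef_sum_vecMulVec_self t s)

lemma mul_dotProduct_self_le_dotProduct_regularizedGram_mulVec (x : n → ℝ) :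
    lam * (x ⬝ᵥ x) ≤ x ⬝ᵥ (regularizedGram lam t s *ᵥ x) := by
  have h := (posSemidef_sum_vecMulVec_self t s).dotProduct_mulVec_nonneg x
  rw [star_trivial] at h
  rw [regularizedGram, add_mulVec, dotProduct_add, smul_mulVec, one_mulVec, dotProduct_smul,
    smul_eq_mul]
  linarith

lemma sum_dotProduct_inv_regularizedGram_mulVec_le (hlam : 0 < lam) :
    ∑ j ∈ t, s j ⬝ᵥ ((regularizedGram lam t s)⁻¹ *ᵥ s j) ≤ Fintype.card n := by
  set C := regularizedGram lam t s
  have hC := posDef_regularizedGram t s hlam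
  have hCC : C⁻¹ * C = 1 := nonsing_inv_mul C ((isUnit_iff_isUnit_det C).mp hC.isUnit)
  have htrace : ∑ j ∈ t, s j ⬝ᵥ (C⁻¹ *ᵥ s j) = trace (C⁻¹ * (C - lam • 1)) := by
    rw [show C - lam • 1 = ∑ j ∈ t, vecMulVec (s j) (s j) from add_sub_cancel_left _ _,
      mul_sum, trace_sum]
    refine sum_congr rfl fun j _ => ?_
    rw [mul_vecMulVec, trace_vecMulVec, dotProduct_comm]
  rw [htrace, mul_sub, hCC, Matrix.mul_smul, mul_one, trace_sub, trace_smul, trace_one, smul_eq_mul]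
  nlinarith [hC.inv.posSemidef.trace_nonneg]

lemma sum_inv_regularizedGram_mulVec_dotProduct_self_le (hlam : 0 < lam) :
    ∑ j ∈ t, ((regularizedGram lam t s)⁻¹ *ᵥ s j) ⬝ᵥ ((regularizedGram lam t s)⁻¹ *ᵥ s j) ≤
      Fintype.card n / lam := by
  set C := regularizedGram lam t s
  have hCC : C * C⁻¹ = 1 :=
    mul_nonsing_inv C ((isUnit_iff_isUnit_det C).mp (posDef_regularizedGram t s hlam).isUnit)
  rw [le_div_iff₀ hlam, sum_mul]
  calc ∑ j ∈ t, (C⁻¹ *ᵥ s j) ⬝ᵥ (C⁻¹ *ᵥ s j) * lam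
      ≤ ∑ j ∈ t, (C⁻¹ *ᵥ s j) ⬝ᵥ (C *ᵥ (C⁻¹ *ᵥ s j)) := sum_le_sum fun j _ => by
        rw [mul_comm]; exact mul_dotProduct_self_le_dotProduct_regularizedGram_mulVec t s _
    _ = ∑ j ∈ t, s j ⬝ᵥ (C⁻¹ *ᵥ s j) := by
        simp only [mulVec_mulVec, hCC, one_mulVec, dotProduct_comm]
    _ ≤ Fintype.card n := sum_dotProduct_inv_regularizedGram_mulVec_le t s hlam

end RegularizedGram

section EuclNorm

variable {d : ℕ}

lemma euclNorm_eq_norm_toLp (v : Fin d → ℝ) : euclNorm v = ‖WithLp.toLp 2 v‖ := by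
  simp [EuclideanSpace.norm_eq, euclNorm]

lemma euclNorm_nonneg (v : Fin d → ℝ) : 0 ≤ euclNorm v := Real.sqrt_nonneg _

lemma euclNorm_sq (v : Fin d → ℝ) : euclNorm v ^ 2 = v ⬝ᵥ v := by
  rw [euclNorm, Real.sq_sqrt (by positivity)]
  simp [dotProduct, sq]

lemma abs_dotProduct_le_euclNorm_mul (a b : Fin d → ℝ) :
    |a ⬝ᵥ b| ≤ euclNorm a * euclNorm b := by
  simpa [euclNorm_eq_norm_toLp, EuclideanSpace.inner_eq_star_dotProduct, dotProduct_comm]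
    using abs_real_inner_le_norm (WithLp.toLp 2 a) (WithLp.toLp 2 b)

lemma euclNorm_sum_le {ι : Type*} (t : Finset ι) (f : ι → Fin d → ℝ) :
    euclNorm (∑ j ∈ t, f j) ≤ ∑ j ∈ t, euclNorm (f j) := by
  simpa [euclNorm_eq_norm_toLp, WithLp.toLp_sum] using norm_sum_le t fun j => WithLp.toLp 2 (f j)

lemma euclNorm_sub_le_sum_Ico (v : ℕ → Fin d → ℝ) {j k : ℕ} (hjk : j ≤ k) :
    euclNorm (v j - v k) ≤ ∑ i ∈ Ico j k, euclNorm (v (i + 1) - v i) := by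
  have h := dist_le_Ico_sum_dist (fun i => WithLp.toLp 2 (v i)) hjk
  simp only [dist_eq_norm'] at h
  simpa [euclNorm_eq_norm_toLp, norm_sub_rev (WithLp.toLp 2 (v j))] using h

lemma euclNorm_sub_le_sum_Icc (v : ℕ → Fin d → ℝ) {l j k : ℕ} (hlj : l ≤ j) (hjk : j ≤ k) :
    euclNorm (v j - v k) ≤ ∑ i ∈ Icc l (k - 1), euclNorm (v (i + 1) - v i) :=
  (euclNorm_sub_le_sum_Ico v hjk).trans <| sum_le_sum_of_subset_of_nonneg
    (fun i hi => by simp only [mem_Ico, mem_Icc] at hi ⊢; omega) fun i _ _ => euclNorm_nonneg _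

end EuclNorm

theorem euclNorm_inv_regularizedGram_mulVec_sum_smul_le {d : ℕ} {ι : Type*} {lam : ℝ}
    (hlam : 0 < lam) (t : Finset ι) (s : ι → Fin d → ℝ) (c : ι → ℝ) :
    euclNorm ((regularizedGram lam t s)⁻¹ *ᵥ ∑ j ∈ t, c j • s j) ≤
      √(d / lam) * √(∑ j ∈ t, c j ^ 2) := by
  set C := regularizedGram lam t s
  calc euclNorm (C⁻¹ *ᵥ ∑ j ∈ t, c j • s j)
      ≤ ∑ j ∈ t, |c j| * euclNorm (C⁻¹ *ᵥ s j) := by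
        rw [mulVec_sum]
        refine (euclNorm_sum_le _ _).trans (sum_le_sum fun j _ => ?_)
        rw [mulVec_smul, euclNorm_eq_norm_toLp, euclNorm_eq_norm_toLp, WithLp.toLp_smul,
          norm_smul, Real.norm_eq_abs]
    _ ≤ √(∑ j ∈ t, |c j| ^ 2) * √(∑ j ∈ t, euclNorm (C⁻¹ *ᵥ s j) ^ 2) :=
        Real.sum_mul_le_sqrt_mul_sqrt _ _ _
    _ ≤ √(d / lam) * √(∑ j ∈ t, c j ^ 2) := by
        simp only [sq_abs, euclNorm_sq]
        rw [mul_comm]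
        gcongr
        simpa using sum_inv_regularizedGram_mulVec_dotProduct_self_le t s hlam

theorem stmt_6_general (d M k : ℕ)
    (lam : ℝ) (hlam : 0 < lam)
    (v : ℕ → Fin d → ℝ) (s : ℕ → Fin d → ℝ)
    (hs : ∀ j ∈ Finset.Icc (max 1 (k - M - 1)) (k - 1), euclNorm (s j) = 1) :
    euclNorm ((lam • (1 : Matrix (Fin d) (Fin d) ℝ) +
        ∑ j ∈ Finset.Icc (max 1 (k - M - 1)) (k - 1), vecMulVec (s j) (s j))⁻¹ *ᵥ
      (∑ j ∈ Finset.Icc (max 1 (k - M - 1)) (k - 1),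
        vecMulVec (s j) (s j) *ᵥ (v j - v k))) ≤
    Real.sqrt ((d : ℝ) * ((M : ℝ) + 1) / lam) *
      ∑ i ∈ Finset.Icc (max 1 (k - M - 1)) (k - 1), euclNorm (v (i + 1) - v i) := by
  set I := Icc (max 1 (k - M - 1)) (k - 1)
  set T := ∑ i ∈ I, euclNorm (v (i + 1) - v i)
  have hT : 0 ≤ T := sum_nonneg fun i _ => euclNorm_nonneg _
  have hcoef : ∀ j ∈ I, |s j ⬝ᵥ (v j - v k)| ≤ T := fun j hj => by
    calc |s j ⬝ᵥ (v j - v k)| ≤ euclNorm (v j - v k) := by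
          simpa [hs j hj] using abs_dotProduct_le_euclNorm_mul (s j) (v j - v k)
      _ ≤ T := euclNorm_sub_le_sum_Icc v (mem_Icc.mp hj).1 ((mem_Icc.mp hj).2.trans (k.sub_le 1))
  have hcard : (#I : ℝ) ≤ M + 1 := by
    exact_mod_cast (show #I ≤ M + 1 by simp only [I, Nat.card_Icc]; omega)
  have hsq : ∑ j ∈ I, (s j ⬝ᵥ (v j - v k)) ^ 2 ≤ (M + 1) * T ^ 2 := by
    calc ∑ j ∈ I, (s j ⬝ᵥ (v j - v k)) ^ 2 ≤ #I * T ^ 2 := by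
          refine (sum_le_card_nsmul I _ (T ^ 2) fun j hj => ?_).trans_eq (nsmul_eq_mul _ _)
          simpa only [sq_abs] using pow_le_pow_left₀ (abs_nonneg _) (hcoef j hj) 2
      _ ≤ (M + 1) * T ^ 2 := by gcongr
  simp only [vecMulVec_self_mulVec]
  calc _ ≤ √(d / lam) * √(∑ j ∈ I, (s j ⬝ᵥ (v j - v k)) ^ 2) :=
        euclNorm_inv_regularizedGram_mulVec_sum_smul_le hlam I s _
    _ ≤ √(d / lam) * √((M + 1) * T ^ 2) := by gcongr
    _ = √(d * (M + 1) / lam) * T := by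
        rw [Real.sqrt_mul (by positivity), Real.sqrt_sq hT, ← mul_assoc, ← Real.sqrt_mul
          (by positivity), div_mul_eq_mul_div]

/-- Bias-term bound from the proof of Lemma 3.1. -/
theorem stmt_6 (d M k : ℕ) (hd : 1 ≤ d) (hM : 1 ≤ M) (hk : 2 ≤ k)
    (lam : ℝ) (hlam : 0 < lam)
    (v : ℕ → Fin d → ℝ) (s : ℕ → Fin d → ℝ)
    (hs : ∀ j ∈ Finset.Icc (max 1 (k - M - 1)) (k - 1), euclNorm (s j) = 1) :
    euclNorm ((lam • (1 : Matrix (Fin d) (Fin d) ℝ) +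
        ∑ j ∈ Finset.Icc (max 1 (k - M - 1)) (k - 1), vecMulVec (s j) (s j))⁻¹ *ᵥ
      (∑ j ∈ Finset.Icc (max 1 (k - M - 1)) (k - 1),
        vecMulVec (s j) (s j) *ᵥ (v j - v k))) ≤
    Real.sqrt ((d : ℝ) * ((M : ℝ) + 1) / lam) *
      ∑ i ∈ Finset.Icc (max 1 (k - M - 1)) (k - 1), euclNorm (v (i + 1) - v i) :=
  stmt_6_general d M k lam hlam v s hs
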